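/- Let R be a ℤ₊-ring, Q a Serre semiprime ideal (an intersection of Serre prime ideals), and I a left Serre ideal such that Iⁿ ⊆ Q for some n ≥ 1. Then I ⊆ Q. -/

import Mathlib

/-!
Serre ideals are determined by their sets of basis indices, and the index set of a product
of Serre ideals is computed from the supports of the products `b α * b β`. Since the
structure constants are nonnegative, no cancellation occurs in products of positive
elements, which makes this product of index sets associative. If `I` and `J` are left
Serre ideals, then `I + IR` and `J + JR` are two-sided Serre ideals whose product lies in
`IJ + IJR`; hence a Serre prime `P` containing `IJ` contains `I` or `J`. Applied to
`Iⁿ⁺¹ = I · Iⁿ ⊆ P`, this peels off one factor at a time until `I ⊆ P`.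
-/

variable {Γ R : Type*}

/-- The positive cone `R₊` of a `ℤ₊`-ring with basis `b`. -/
def ZPos [NonUnitalRing R] (b : Module.Basis Γ ℤ R) : Set R :=
  {r | ∀ γ : Γ, 0 ≤ b.repr r γ}

/-- The structure constants of the multiplication with respect to `b` are nonnegative,
i.e. `(R, b)` is a `ℤ₊`-ring. -/
def PosBasis [NonUnitalRing R] (b : Module.Basis Γ ℤ R) : Prop :=
  ∀ α β γ : Γ, 0 ≤ b.repr (b α * b β) γ

/-- A Serre ideal: a two-sided ideal of the form `⨁_{γ ∈ Γ'} ℤ b_γ`. -/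
def IsSerreIdeal [NonUnitalRing R] (b : Module.Basis Γ ℤ R) (I : Set R) : Prop :=
  (∃ Γ' : Set Γ, I = ↑(Submodule.span ℤ (⇑b '' Γ'))) ∧
  (∀ r ∈ I, ∀ s : R, s * r ∈ I) ∧
  (∀ r ∈ I, ∀ s : R, r * s ∈ I)

/-- A Serre prime ideal: a proper Serre ideal `P` such that for all Serre ideals
`I, J`, `IJ ⊆ P` implies `I ⊆ P` or `J ⊆ P`. -/
def IsSerrePrime [NonUnitalRing R] (b : Module.Basis Γ ℤ R) (P : Set R) : Prop :=
  IsSerreIdeal b P ∧ P ≠ Set.univ ∧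
    ∀ I J : Set R, IsSerreIdeal b I → IsSerreIdeal b J →
      (∀ x ∈ I, ∀ y ∈ J, x * y ∈ P) → I ⊆ P ∨ J ⊆ P

/-- The product `f 0 * f 1 * ⋯ * f m` of a nonempty tuple of ring elements. -/
def finProd [NonUnitalRing R] : ∀ {m : ℕ}, (Fin (m + 1) → R) → R
  | 0, f => f 0
  | _ + 1, f => f 0 * finProd fun i => f i.succ

section SerreIdeal

variable [NonUnitalRing R]

open Submodule Set

section Positivity

variable {b : Module.Basis Γ ℤ R}

theorem repr_mul_apply (x y : R) (γ : Γ) :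
    b.repr (x * y) γ = ∑ α ∈ (b.repr x).support, ∑ β ∈ (b.repr y).support,
      b.repr x α * b.repr y β * b.repr (b α * b β) γ := by
  conv_lhs => rw [← b.linearCombination_repr x, ← b.linearCombination_repr y]
  simp only [Finsupp.linearCombination_apply, Finsupp.sum, Finset.sum_mul_sum, map_sum,
    Finsupp.coe_finsetSum, Finset.sum_apply, smul_mul_smul_comm, map_smul, Finsupp.smul_apply,
    smul_eq_mul]

theorem mul_mem_zPos (hpos : PosBasis b) {x y : R} (hx : x ∈ ZPos b) (hy : y ∈ ZPos b) :
    x * y ∈ ZPos b := fun γ => by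
  rw [repr_mul_apply]
  exact Finset.sum_nonneg fun α _ => Finset.sum_nonneg fun β _ =>
    mul_nonneg (mul_nonneg (hx α) (hy β)) (hpos α β γ)

theorem basis_mem_zPos (γ : Γ) : b γ ∈ ZPos b := fun δ => by
  rw [b.repr_self]; exact Finsupp.single_nonneg.2 zero_le_one δ

theorem repr_mul_ne_zero_iff (hpos : PosBasis b) {x y : R} (hx : x ∈ ZPos b) (hy : y ∈ ZPos b)
    (γ : Γ) : b.repr (x * y) γ ≠ 0 ↔
      ∃ α β, b.repr x α ≠ 0 ∧ b.repr y β ≠ 0 ∧ b.repr (b α * b β) γ ≠ 0 := by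
  have hterm : ∀ α β, 0 ≤ b.repr x α * b.repr y β * b.repr (b α * b β) γ :=
    fun α β => mul_nonneg (mul_nonneg (hx α) (hy β)) (hpos α β γ)
  rw [repr_mul_apply, Ne, Finset.sum_eq_zero_iff_of_nonneg fun α _ => Finset.sum_nonneg
    fun β _ => hterm α β]
  simp only [Finset.sum_eq_zero_iff_of_nonneg fun β _ => hterm _ β, Finsupp.mem_support_iff,
    mul_eq_zero]
  push Not
  exact ⟨fun ⟨α, _, β, _, ⟨hα, hβ⟩, h⟩ => ⟨α, β, hα, hβ, h⟩,
    fun ⟨α, β, hα, hβ, h⟩ => ⟨α, hα, β, hβ, ⟨hα, hβ⟩, h⟩⟩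

theorem repr_mul_basis_ne_zero_iff (hpos : PosBasis b) {x : R} (hx : x ∈ ZPos b) (ζ γ : Γ) :
    b.repr (x * b ζ) γ ≠ 0 ↔ ∃ δ, b.repr x δ ≠ 0 ∧ b.repr (b δ * b ζ) γ ≠ 0 := by
  simp [repr_mul_ne_zero_iff hpos hx (basis_mem_zPos ζ), Finsupp.single_apply_ne_zero]

theorem repr_basis_mul_ne_zero_iff (hpos : PosBasis b) {y : R} (hy : y ∈ ZPos b) (α γ : Γ) :
    b.repr (b α * y) γ ≠ 0 ↔ ∃ ε, b.repr y ε ≠ 0 ∧ b.repr (b α * b ε) γ ≠ 0 := by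
  simp [repr_mul_ne_zero_iff hpos (basis_mem_zPos α) hy, Finsupp.single_apply_ne_zero]

theorem finProd_mem_zPos (hpos : PosBasis b) :
    ∀ {m : ℕ} (f : Fin (m + 1) → R), (∀ i, f i ∈ ZPos b) → finProd f ∈ ZPos b
  | 0, _, hf => hf 0
  | _ + 1, _, hf => mul_mem_zPos hpos (hf 0) (finProd_mem_zPos hpos _ fun i => hf i.succ)

end Positivity

variable (b : Module.Basis Γ ℤ R)

def serreMul (A B : Set Γ) : Set Γ :=
  {γ | ∃ α ∈ A, ∃ β ∈ B, b.repr (b α * b β) γ ≠ 0}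

/-- `serrePow b A m` has `m + 1` factors, matching `finProd`. -/
def serrePow (A : Set Γ) : ℕ → Set Γ
  | 0 => A
  | m + 1 => serreMul b A (serrePow A m)

variable {b}

theorem serreMul_mono {A A' B B' : Set Γ} (hA : A ⊆ A') (hB : B ⊆ B') :
    serreMul b A B ⊆ serreMul b A' B' := by
  rintro γ ⟨α, hα, β, hβ, h⟩
  exact ⟨α, hA hα, β, hB hβ, h⟩

theorem serreMul_union_left (A A' B : Set Γ) :
    serreMul b (A ∪ A') B = serreMul b A B ∪ serreMul b A' B := by
  ext γ; simp only [serreMul, mem_union, mem_ofPred_eq, or_and_right, exists_or]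

theorem serreMul_union_right (A B B' : Set Γ) :
    serreMul b A (B ∪ B') = serreMul b A B ∪ serreMul b A B' := by
  ext γ; simp only [serreMul, mem_union, mem_ofPred_eq, or_and_right, and_or_left, exists_or]

theorem mul_mem_span_iff_serreMul_subset {A B C : Set Γ} :
    (∀ x ∈ span ℤ (b '' A), ∀ y ∈ span ℤ (b '' B), x * y ∈ span ℤ (b '' C)) ↔
      serreMul b A B ⊆ C := by
  have key := map₂_le (f := LinearMap.mul ℤ R) (p := span ℤ (b '' A)) (q := span ℤ (b '' B))
    (r := span ℤ (b '' C))
  rw [map₂_span_span, span_le] at key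
  simp only [LinearMap.mul_apply'] at key
  rw [← key, image2_image_left, image2_image_right, image2_subset_iff]
  simp only [SetLike.mem_coe, b.mem_span_image, serreMul, subset_def, Finsupp.mem_support_iff,
    mem_ofPred_eq, forall_exists_index, and_imp]
  exact ⟨fun h γ α hα β hβ hγ => h α hα β hβ γ hγ, fun h α hα β hβ γ hγ => h γ α hα β hβ hγ⟩

theorem isSerreIdeal_span_iff {A : Set Γ} :
    IsSerreIdeal b (span ℤ (b '' A)) ↔ serreMul b univ A ⊆ A ∧ serreMul b A univ ⊆ A := by
  rw [← mul_mem_span_iff_serreMul_subset, ← mul_mem_span_iff_serreMul_subset, image_univ,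
    b.span_eq]
  simp only [mem_top, forall_const]
  exact ⟨fun ⟨_, hl, hr⟩ => ⟨fun x y hy => hl y hy x, fun x hx y => hr x hx y⟩,
    fun ⟨hl, hr⟩ => ⟨⟨A, rfl⟩, fun x hx y => hl y x hx, fun x hx y => hr x hx y⟩⟩

theorem serreMul_assoc (hpos : PosBasis b) (A B C : Set Γ) :
    serreMul b (serreMul b A B) C = serreMul b A (serreMul b B C) := by
  have hprod : ∀ α β, b α * b β ∈ ZPos b :=
    fun α β => mul_mem_zPos hpos (basis_mem_zPos α) (basis_mem_zPos β)
  ext γ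
  constructor
  · rintro ⟨δ, ⟨α, hα, β, hβ, hδ⟩, ζ, hζ, h⟩
    have : b.repr (b α * (b β * b ζ)) γ ≠ 0 := by
      rw [← mul_assoc]; exact (repr_mul_basis_ne_zero_iff hpos (hprod α β) ζ γ).2 ⟨δ, hδ, h⟩
    obtain ⟨ε, hε, h'⟩ := (repr_basis_mul_ne_zero_iff hpos (hprod β ζ) α γ).1 this
    exact ⟨α, hα, ε, ⟨β, hβ, ζ, hζ, hε⟩, h'⟩
  · rintro ⟨α, hα, ε, ⟨β, hβ, ζ, hζ, hε⟩, h⟩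
    have : b.repr (b α * b β * b ζ) γ ≠ 0 := by
      rw [mul_assoc]; exact (repr_basis_mul_ne_zero_iff hpos (hprod β ζ) α γ).2 ⟨ε, hε, h⟩
    obtain ⟨δ, hδ, h'⟩ := (repr_mul_basis_ne_zero_iff hpos (hprod α β) ζ γ).1 this
    exact ⟨δ, ⟨α, hα, β, hβ, hδ⟩, ζ, hζ, h'⟩

theorem exists_repr_finProd_ne_zero_of_mem_serrePow (hpos : PosBasis b) {A : Set Γ} :
    ∀ {m : ℕ} {γ : Γ}, γ ∈ serrePow b A m →
      ∃ g : Fin (m + 1) → Γ, (∀ i, g i ∈ A) ∧ b.repr (finProd (b ∘ g)) γ ≠ 0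
  | 0, γ, hγ => ⟨fun _ => γ, fun _ => hγ, by simp [finProd]⟩
  | _ + 1, γ, ⟨α, hα, δ, hδ, h⟩ => by
    obtain ⟨g, hg, hgδ⟩ := exists_repr_finProd_ne_zero_of_mem_serrePow hpos hδ
    refine ⟨Fin.cons α g, Fin.cases hα hg, ?_⟩
    have hg_pos := finProd_mem_zPos hpos (b ∘ g) fun i => basis_mem_zPos (g i)
    simpa [finProd, Function.comp_def] using
      (repr_basis_mul_ne_zero_iff hpos hg_pos α γ).2 ⟨δ, hgδ, h⟩

theorem serrePow_subset_of_finProd_mem (hpos : PosBasis b) {A T : Set Γ} {m : ℕ}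
    (h : ∀ f : Fin (m + 1) → R, (∀ i, f i ∈ span ℤ (b '' A)) → finProd f ∈ span ℤ (b '' T)) :
    serrePow b A m ⊆ T := fun γ hγ => by
  obtain ⟨g, hg, hne⟩ := exists_repr_finProd_ne_zero_of_mem_serrePow hpos hγ
  exact b.mem_span_image.1 (h _ fun i => subset_span (mem_image_of_mem b (hg i)))
    (Finsupp.mem_support_iff.2 hne)

theorem serreMul_univ_serrePow_subset (hpos : PosBasis b) {A : Set Γ}
    (hA : serreMul b univ A ⊆ A) : ∀ m, serreMul b univ (serrePow b A m) ⊆ serrePow b A m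
  | 0 => hA
  | m + 1 => by
    rw [serrePow, ← serreMul_assoc hpos]
    exact serreMul_mono hA subset_rfl

theorem isSerreIdeal_span_union_serreMul_univ (hpos : PosBasis b) {A : Set Γ}
    (hA : serreMul b univ A ⊆ A) : IsSerreIdeal b (span ℤ (b '' (A ∪ serreMul b A univ))) := by
  refine isSerreIdeal_span_iff.2 ⟨?_, ?_⟩
  · rw [serreMul_union_right, ← serreMul_assoc hpos]
    exact union_subset_union hA (serreMul_mono hA subset_rfl)
  · rw [serreMul_union_left, serreMul_assoc hpos]
    exact union_subset subset_union_right
      ((serreMul_mono subset_rfl (subset_univ _)).trans subset_union_right)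

theorem serreMul_union_serreMul_univ_subset (hpos : PosBasis b) (A : Set Γ) {B : Set Γ}
    (hB : serreMul b univ B ⊆ B) :
    serreMul b (A ∪ serreMul b A univ) (B ∪ serreMul b B univ) ⊆
      serreMul b A B ∪ serreMul b (serreMul b A B) univ := by
  rw [serreMul_union_left, serreMul_union_right, serreMul_union_right, serreMul_assoc hpos,
    serreMul_assoc hpos, ← serreMul_assoc hpos univ, ← serreMul_assoc hpos A B]
  refine union_subset subset_rfl (union_subset ?_ ?_)
  · exact (serreMul_mono subset_rfl hB).trans subset_union_left
  · exact (serreMul_mono subset_rfl (serreMul_mono hB subset_rfl)).trans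
      (by rw [serreMul_assoc hpos]; exact subset_union_right)

theorem IsSerrePrime.subset_or_subset_of_serreMul_subset (hpos : PosBasis b) {T A B : Set Γ}
    (hT : IsSerrePrime b (span ℤ (b '' T))) (hA : serreMul b univ A ⊆ A)
    (hB : serreMul b univ B ⊆ B) (hAB : serreMul b A B ⊆ T) : A ⊆ T ∨ B ⊆ T := by
  obtain ⟨hTideal, -, hprime⟩ := hT
  have hTright : serreMul b T univ ⊆ T := (isSerreIdeal_span_iff.1 hTideal).2
  have hclosure : serreMul b (A ∪ serreMul b A univ) (B ∪ serreMul b B univ) ⊆ T :=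
    (serreMul_union_serreMul_univ_subset hpos A hB).trans
      (union_subset hAB ((serreMul_mono hAB subset_rfl).trans hTright))
  have of_span_subset : ∀ {C : Set Γ}, (span ℤ (b '' (C ∪ serreMul b C univ)) : Set R) ⊆
      span ℤ (b '' T) → C ⊆ T := fun h γ hγ =>
    b.self_mem_span_image.1 (h (subset_span (mem_image_of_mem b (Or.inl hγ))))
  exact (hprime _ _ (isSerreIdeal_span_union_serreMul_univ hpos hA)
    (isSerreIdeal_span_union_serreMul_univ hpos hB)
    (mul_mem_span_iff_serreMul_subset.2 hclosure)).imp of_span_subset of_span_subset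

theorem IsSerrePrime.subset_of_serrePow_subset (hpos : PosBasis b) {T A : Set Γ}
    (hT : IsSerrePrime b (span ℤ (b '' T))) (hA : serreMul b univ A ⊆ A) :
    ∀ {m : ℕ}, serrePow b A m ⊆ T → A ⊆ T
  | 0, h => h
  | _ + 1, h =>
    (hT.subset_or_subset_of_serreMul_subset hpos hA (serreMul_univ_serrePow_subset hpos hA _)
      h).elim id (hT.subset_of_serrePow_subset hpos hA)

end SerreIdeal

/-- if `Q` is a Serre semiprime ideal (an intersection of Serre
prime ideals) of a `ℤ₊`-ring and `I` is a left Serre ideal with `Iⁿ ⊆ Q` for some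
`n ≥ 1`, then `I ⊆ Q`. -/
theorem left_serreIdeal_le_of_pow_le_serreSemiprime
    [NonUnitalRing R] (b : Module.Basis Γ ℤ R) (hpos : PosBasis b)
    (Q : Set R) (hQ : ∃ S : Set (Set R), (∀ P ∈ S, IsSerrePrime b P) ∧ Q = ⋂₀ S)
    (I : Set R) (hgraded : ∃ Γ' : Set Γ, I = ↑(Submodule.span ℤ (⇑b '' Γ')))
    (hleft : ∀ r ∈ I, ∀ s : R, s * r ∈ I)
    (n : ℕ) (hpow : ∀ f : Fin (n + 1) → R, (∀ i, f i ∈ I) → finProd f ∈ Q) :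
    I ⊆ Q := by
  obtain ⟨S, hS, rfl⟩ := hQ
  obtain ⟨A, rfl⟩ := hgraded
  have hA : serreMul b Set.univ A ⊆ A :=
    mul_mem_span_iff_serreMul_subset.1 fun x _ y hy => hleft y hy x
  intro x hx P hP
  obtain ⟨T, rfl⟩ := (hS P hP).1.1
  have hpowT : serrePow b A n ⊆ T :=
    serrePow_subset_of_finProd_mem hpos fun f hf => hpow f hf _ hP
  exact Submodule.span_mono (Set.image_mono ((hS _ hP).subset_of_serrePow_subset hpos hA hpowT)) hx
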